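/- Let α, β, γ, t be integers with 1 ≤ α ≤ β ≤ γ < 2(α+β), with α+β+γ divisible by 3, and with t > (α+β+γ)/3. Set σ = α+β+γ, s = (2/3)σ + t − 2, and e = σ + 2t − 3, and for d ∈ ℕ let h(d) be the number of triples (a,b,c) ∈ ℕ³ with a+b+c = d, a < α+t, b < β+t, c < γ+t, and not (a ≥ α and b ≥ β and c ≥ γ). Then h(d) > h(d+1) for every integer d with s+1 ≤ d < e. -/
import Mathlib

/-- The Hilbert function of `R/I` where
`I = (x^{α+t}, y^{β+t}, z^{γ+t}, x^α y^β z^γ) ⊂ K[x,y,z]`: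
`hilb α β γ t d` is the number of triples `(a,b,c) ∈ ℕ³` with `a+b+c = d`,
`a < α+t`, `b < β+t`, `c < γ+t`, and not (`a ≥ α` and `b ≥ β` and `c ≥ γ`). -/
def hilb (α β γ t d : ℕ) : ℕ :=
  ((Finset.range (α + t) ×ˢ Finset.range (β + t) ×ˢ Finset.range (γ + t)).filter
    (fun p => p.1 + p.2.1 + p.2.2 = d ∧ ¬(α ≤ p.1 ∧ β ≤ p.2.1 ∧ γ ≤ p.2.2))).card

/-- Number of `(a,b,c)` with `a<p`, `b<q`, `c<r`, `a+b+c=m`. -/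
def boxc (p q r m : ℕ) : ℕ :=
  ((Finset.range p ×ˢ Finset.range q ×ˢ Finset.range r).filter
    (fun x => x.1 + x.2.1 + x.2.2 = m)).card

/-- Fiber count: number of `(b,c)` with `b<q`, `c<r`, `a+b+c=m`. -/
def fib (q r a m : ℕ) : ℕ :=
  ((Finset.range q ×ˢ Finset.range r).filter (fun y => a + y.1 + y.2 = m)).card

lemma box_sum (p q r m : ℕ) : boxc p q r m = ∑ a ∈ Finset.range p, fib q r a m := by
  unfold boxc fib
  rw [Finset.card_filter, Finset.sum_product]
  exact Finset.sum_congr rfl (fun a _ => (Finset.card_filter _ _).symm)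

lemma fib_shift (q r a m : ℕ) : fib q r (a + 1) (m + 1) = fib q r a m := by
  unfold fib
  congr 1
  apply Finset.filter_congr
  intro y _
  omega

lemma fib_big (q r a m : ℕ) (h : m < a) : fib q r a m = 0 := by
  unfold fib
  rw [Finset.card_eq_zero, Finset.filter_eq_empty_iff]
  intro y _
  omega

lemma fib_eq (q r a m : ℕ) (h : a ≤ m) : fib q r a m = fib q r 0 (m - a) := by
  unfold fib
  congr 1
  apply Finset.filter_congr
  intro y _
  omega

lemma fib_zero_eq (q r n : ℕ) (hq : 1 ≤ q) (hr : 1 ≤ r) :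
    fib q r 0 n = min (n + 1) q - (n + 1 - r) := by
  unfold fib
  rw [show ((Finset.range q ×ˢ Finset.range r).filter (fun y => 0 + y.1 + y.2 = n))
      = (Finset.Ico (n + 1 - r) (min (n + 1) q)).image (fun b => (b, n - b)) from ?_]
  · rw [Finset.card_image_of_injective _ (fun a b h => by
      simpa using congrArg Prod.fst h)]
    rw [Nat.card_Ico]
  · ext ⟨b, c⟩
    simp only [Finset.mem_filter, Finset.mem_product, Finset.mem_range, Finset.mem_image,
      Finset.mem_Ico, Prod.mk.injEq]
    constructor
    · rintro ⟨⟨hb, hc⟩, hn⟩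
      exact ⟨b, by omega, rfl, by omega⟩
    · rintro ⟨x, ⟨h1, h2⟩, rfl, rfl⟩
      omega

lemma box_rec (p q r m : ℕ) (hp : 1 ≤ p) :
    boxc p q r (m + 1) + fib q r (p - 1) m = boxc p q r m + fib q r 0 (m + 1) := by
  obtain ⟨p', rfl⟩ : ∃ p', p = p' + 1 := ⟨p - 1, by omega⟩
  rw [box_sum, box_sum,
    Finset.sum_range_succ' (fun a => fib q r a (m + 1)) p',
    Finset.sum_range_succ (fun a => fib q r a m) p']
  simp only [fib_shift]
  simp only [Nat.add_sub_cancel]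
  omega

lemma hilb_split (α β γ t d : ℕ) (hd : α + β + γ ≤ d) :
    hilb α β γ t d + boxc t t t (d - (α + β + γ)) = boxc (α + t) (β + t) (γ + t) d := by
  have key : (((Finset.range (α + t) ×ˢ Finset.range (β + t) ×ˢ Finset.range (γ + t)).filter
      (fun p => p.1 + p.2.1 + p.2.2 = d)).filter
      (fun p => α ≤ p.1 ∧ β ≤ p.2.1 ∧ γ ≤ p.2.2)).card
      = boxc t t t (d - (α + β + γ)) := by
    unfold boxc
    refine Finset.card_bij' (fun x _ => (x.1 - α, x.2.1 - β, x.2.2 - γ))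
      (fun y _ => (y.1 + α, y.2.1 + β, y.2.2 + γ)) ?_ ?_ ?_ ?_
    all_goals intro x hx
    all_goals simp only [Finset.mem_filter, Finset.mem_product, Finset.mem_range,
      Prod.mk.injEq, Prod.ext_iff] at hx ⊢
    all_goals omega
  have split := Finset.card_filter_add_card_filter_not
    (s := (Finset.range (α + t) ×ˢ Finset.range (β + t) ×ˢ Finset.range (γ + t)).filter
      (fun p => p.1 + p.2.1 + p.2.2 = d))
    (p := fun p => α ≤ p.1 ∧ β ≤ p.2.1 ∧ γ ≤ p.2.2)
  rw [key] at split
  have hh : ((Finset.range (α + t) ×ˢ Finset.range (β + t) ×ˢ Finset.range (γ + t)).filter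
      (fun p => p.1 + p.2.1 + p.2.2 = d)).filter
      (fun p => ¬(α ≤ p.1 ∧ β ≤ p.2.1 ∧ γ ≤ p.2.2)) =
      ((Finset.range (α + t) ×ˢ Finset.range (β + t) ×ˢ Finset.range (γ + t)).filter
      (fun p => p.1 + p.2.1 + p.2.2 = d ∧ ¬(α ≤ p.1 ∧ β ≤ p.2.1 ∧ γ ≤ p.2.2))) := by
    rw [Finset.filter_filter]
  rw [hh] at split
  unfold hilb boxc
  rw [Nat.add_comm]
  exact split

set_option maxHeartbeats 1600000 in
/-- The Hilbert function strictly decreases in degrees `s+1 ≤ d < e`, where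
`s = (2/3)(α+β+γ) + t - 2` is encoded by `3(s+2) = 2(α+β+γ) + 3t` and the socle
degree `e = α+β+γ+2t-3` is encoded by `e + 3 = α+β+γ+2t`. -/
theorem hilb_strict_decrease (α β γ t s e : ℕ)
    (hα : 1 ≤ α) (hαβ : α ≤ β) (hβγ : β ≤ γ) (hγ : γ < 2 * (α + β))
    (h3 : 3 ∣ (α + β + γ)) (ht : α + β + γ < 3 * t)
    (hs : 3 * (s + 2) = 2 * (α + β + γ) + 3 * t)
    (he : e + 3 = α + β + γ + 2 * t) :
    ∀ d : ℕ, s + 1 ≤ d → d < e → hilb α β γ t d > hilb α β γ t (d + 1) := by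
  intro d hd1 hd2
  have ht1 : 1 ≤ t := by omega
  have hσd : α + β + γ ≤ d := by omega
  have hPd : α + t - 1 ≤ d := by omega
  obtain ⟨M, hMd⟩ : ∃ M, α + β + γ + M = d := ⟨d - (α + β + γ), by omega⟩
  obtain ⟨N, hNd⟩ : ∃ N, α + t - 1 + N = d := ⟨d - (α + t - 1), by omega⟩
  have hsM : d - (α + β + γ) = M := by omega
  have hsM1 : d + 1 - (α + β + γ) = M + 1 := by omega
  have hsN : d - (α + t - 1) = N := by omega
  have e2 : min (d + 1 + 1) (β + t) = β + t := by omega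
  have hM1 : 3 * t ≤ α + β + γ + 3 * M + 3 := by omega
  have hM2 : M + 4 ≤ 2 * t := by omega
  have hN : N + t = β + γ + M + 1 := by omega
  rcases le_or_gt (t - 1) M with hc | hc
  · -- the fiber `fib t t (t-1) M` is nonempty case
    obtain ⟨K, hK⟩ : ∃ K, t + K = M + 1 := ⟨M + 1 - t, by omega⟩
    have hsK : M - (t - 1) = K := by omega
    have e4a : min (K + 1) t = K + 1 := by omega
    have e4b : K + 1 - t = 0 := by omega
    have h1 := hilb_split α β γ t d hσd
    have h2 := hilb_split α β γ t (d + 1) (by omega)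
    rw [hsM] at h1
    rw [hsM1] at h2
    have h3' := box_rec (α + t) (β + t) (γ + t) d (by omega)
    have h4 := box_rec t t t M ht1
    rw [fib_eq _ _ _ _ hPd, hsN,
      fib_zero_eq (β + t) (γ + t) N (by omega) (by omega),
      fib_zero_eq (β + t) (γ + t) (d + 1) (by omega) (by omega), e2] at h3'
    rw [fib_eq _ _ _ _ hc, hsK, fib_zero_eq t t K ht1 ht1, e4a, e4b,
      fib_zero_eq t t (M + 1) ht1 ht1] at h4
    clear hsM hsM1 hsN hsK e2 e4a e4b hσd hPd hNd hd1 hd2 hs he h3 hc ht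
    rcases le_total (N + 1) (β + t) with hm1 | hm1
    · rw [min_eq_left hm1] at h3'
      rcases le_total (M + 1 + 1) t with hm2 | hm2
      · rw [min_eq_left hm2] at h4; omega
      · rw [min_eq_right hm2] at h4; omega
    · rw [min_eq_right hm1] at h3'
      rcases le_total (M + 1 + 1) t with hm2 | hm2
      · rw [min_eq_left hm2] at h4; omega
      · rw [min_eq_right hm2] at h4; omega
  · -- the fiber `fib t t (t-1) M` is empty case
    have hc' : M + 1 < t := by omega
    have h1 := hilb_split α β γ t d hσd
    have h2 := hilb_split α β γ t (d + 1) (by omega)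
    rw [hsM] at h1
    rw [hsM1] at h2
    have h3' := box_rec (α + t) (β + t) (γ + t) d (by omega)
    have h4 := box_rec t t t M ht1
    rw [fib_eq _ _ _ _ hPd, hsN,
      fib_zero_eq (β + t) (γ + t) N (by omega) (by omega),
      fib_zero_eq (β + t) (γ + t) (d + 1) (by omega) (by omega), e2] at h3'
    rw [fib_big _ _ _ _ hc, fib_zero_eq t t (M + 1) ht1 ht1] at h4
    clear hsM hsM1 hsN e2 hσd hPd hNd hd1 hd2 hs he h3 hc ht
    rcases le_total (N + 1) (β + t) with hm1 | hm1
    · rw [min_eq_left hm1] at h3'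
      rcases le_total (M + 1 + 1) t with hm2 | hm2
      · rw [min_eq_left hm2] at h4; omega
      · rw [min_eq_right hm2] at h4; omega
    · rw [min_eq_right hm1] at h3'
      rcases le_total (M + 1 + 1) t with hm2 | hm2
      · rw [min_eq_left hm2] at h4; omega
      · rw [min_eq_right hm2] at h4; omega
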